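/- arXiv:2203.00260 — 3 statements merged into one kernel-verified Lean document; each statement's English description precedes it below -/
import Mathlib

section
/- If A ∈ ℝ^{I×F} and B ∈ ℝ^{J×F} both have full column rank F, then the Khatri-Rao product A ⊙ B ∈ ℝ^{IJ×F} has full column rank F. -/
/-- The Khatri-Rao (columnwise Kronecker) product. -/
def khatriRao {I J F : Type*} (A : Matrix I F ℝ) (B : Matrix J F ℝ) :
    Matrix (I × J) F ℝ :=
  Matrix.of fun p f => A p.1 f * B p.2 f

/-!
If `(A ⊙ B) x = 0`, then reading off the block of rows `(·, j)` gives `A (x ∘ B j) = 0`, where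
`x ∘ B j` is the entrywise product of `x` with the `j`-th row of `B`. Injectivity of `A` forces
`x f * B j f = 0` for all `j` and `f`, and since no column of `B` vanishes, `x = 0`.
-/

open Matrix

theorem Matrix.rank_eq_card_iff_linearIndependent_col {m n K : Type*} [Fintype n] [Field K]
    (A : Matrix m n K) : A.rank = Fintype.card n ↔ LinearIndependent K A.col := by
  rw [rank_eq_finrank_span_cols, linearIndependent_iff_card_eq_finrank_span, Set.finrank, eq_comm]

section KhatriRao

variable {I J F : Type*} [Fintype F] (A : Matrix I F ℝ) (B : Matrix J F ℝ)

theorem khatriRao_mulVec_apply (x : F → ℝ) (i : I) (j : J) :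
    (khatriRao A B *ᵥ x) (i, j) = (A *ᵥ (x * B j)) i := by
  simp only [mulVec, dotProduct, khatriRao, of_apply, Pi.mul_apply]
  exact Finset.sum_congr rfl fun f _ => by ring

variable {A B} in
theorem linearIndependent_col_khatriRao (hA : LinearIndependent ℝ A.col)
    (hB : ∀ f, B.col f ≠ 0) : LinearIndependent ℝ (khatriRao A B).col := by
  rw [← mulVec_injective_iff] at hA ⊢
  rw [← coe_mulVecLin, ← LinearMap.ker_eq_bot, LinearMap.ker_eq_bot']
  intro x hx
  have hxB : ∀ j, x * B j = 0 := fun j => hA <| by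
    rw [mulVec_zero]
    funext i
    rw [← khatriRao_mulVec_apply]
    exact congrFun hx (i, j)
  funext f
  by_contra hxf
  exact hB f <| funext fun j => (mul_eq_zero.mp (congrFun (hxB j) f)).resolve_left hxf

end KhatriRao

/-- If both factors have full column rank, so does their Khatri-Rao product. -/
theorem stmt_3 (I J F : ℕ) (A : Matrix (Fin I) (Fin F) ℝ) (B : Matrix (Fin J) (Fin F) ℝ)
    (hA : A.rank = F) (hB : B.rank = F) :
    (khatriRao A B).rank = F := by
  have full_rank_iff {m : Type} (M : Matrix m (Fin F) ℝ) : M.rank = F ↔ LinearIndependent ℝ M.col :=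
    by rw [← rank_eq_card_iff_linearIndependent_col, Fintype.card_fin]
  rw [full_rank_iff] at hA hB ⊢
  exact linearIndependent_col_khatriRao hA hB.ne_zero
end

section
/- If A ∈ ℝ^{I×F} and B ∈ ℝ^{J×F} are random matrices whose joint entries are absolutely continuous with respect to Lebesgue measure on ℝ^{(I+J)F}, and IJ ≥ F, then A ⊙ B has full column rank F almost surely. -/
/-!
The Gram determinant `det ((A ⊙ B)ᵀ (A ⊙ B))` is a polynomial in the entries of `A` and `B`, and it
vanishes exactly when `A ⊙ B` is column-rank deficient. It is not the zero polynomial: when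
`F ≤ IJ`, 0/1 factors can be chosen so that the columns of `A ⊙ B` are distinct unit vectors. The
zero set of a nonzero real polynomial is Lebesgue-null (Fubini and induction on the number of
variables), and absolute continuity transfers this to the law of `(A, B)`.
-/

open MeasureTheory

namespace MeasureTheory

theorem volume_measurePreserving_curry (ι κ : Type*) [Fintype ι] [Fintype κ] :
    MeasurePreserving (MeasurableEquiv.curry ι κ ℝ) volume volume := by
  refine ⟨(MeasurableEquiv.curry ι κ ℝ).measurable, ?_⟩
  refine (Measure.pi_eq_generateFrom (fun _ ↦ generateFrom_pi) (fun _ ↦ isPiSystem_pi)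
    (fun _ ↦ Measure.FiniteSpanningSetsIn.pi fun _ ↦ volume.toFiniteSpanningSetsIn) ?_).symm
  intro s hs
  choose t _ hst using hs
  have hpre : MeasurableEquiv.curry ι κ ℝ ⁻¹' Set.univ.pi s = Set.univ.pi fun p ↦ t p.1 p.2 := by
    ext x
    simp [← hst]
  rw [MeasurableEquiv.map_apply, hpre, volume_pi_pi, Fintype.prod_prod_type]
  refine Finset.prod_congr rfl fun i _ ↦ ?_
  rw [← hst, Measure.pi_pi]

end MeasureTheory

namespace MvPolynomial

theorem volume_setOf_eval_eq_zero_fin {n : ℕ} {p : MvPolynomial (Fin n) ℝ} (hp : p ≠ 0) :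
    volume {x : Fin n → ℝ | eval x p = 0} = 0 := by
  induction n with
  | zero =>
    suffices {x : Fin 0 → ℝ | eval x p = 0} = ∅ by simp [this]
    ext x
    rw [eq_C_of_isEmpty p] at hp ⊢
    simpa using hp
  | succ n ih =>
    -- Fubini, slicing along the first coordinate: `p` is a polynomial in `x 0` whose leading
    -- coefficient is nonzero off a null set, by induction.
    set q := finSuccEquiv ℝ n p
    have hq : q ≠ 0 := by simpa [q] using hp
    have hlc : ∀ᵐ y : Fin n → ℝ, eval y q.leadingCoeff ≠ 0 :=
      ae_iff.2 (by simpa using ih (Polynomial.leadingCoeff_ne_zero.2 hq))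
    have hfiber : ∀ᵐ y : Fin n → ℝ, volume {t : ℝ | eval (Fin.cons t y) p = 0} = 0 := by
      filter_upwards [hlc] with y hy
      have hqy : q.map (eval y) ≠ 0 := fun h ↦ hy <| by
        simpa using congr_arg (Polynomial.coeff · q.natDegree) h
      simp_rw [eval_eq_eval_mv_eval']
      exact (Polynomial.finite_setOfPred_isRoot hqy).measure_zero _
    have hS : MeasurableSet {z : ℝ × (Fin n → ℝ) | eval (Fin.cons z.1 z.2) p = 0} :=
      measurableSet_eq_fun ((continuous_eval p).comp (by fun_prop)).measurable measurable_const
    calc volume {x : Fin (n + 1) → ℝ | eval x p = 0}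
        = (volume.prod volume) {z : ℝ × (Fin n → ℝ) | eval (Fin.cons z.1 z.2) p = 0} := by
          rw [← (volume_preserving_piFinSuccAbove (fun _ ↦ ℝ) 0).symm.measure_preimage_equiv]
          congr 1
          ext z
          simp only [MeasurableEquiv.piFinSuccAbove_symm_apply, Fin.insertNthEquiv_zero,
            Set.preimage_ofPred_eq, Set.mem_ofPred_eq]
          rfl
      _ = 0 := by
          rw [Measure.prod_apply_symm hS]
          exact lintegral_eq_zero_of_ae_eq_zero hfiber

theorem volume_setOf_eval_eq_zero {ι : Type*} [Fintype ι] {p : MvPolynomial ι ℝ} (hp : p ≠ 0) :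
    volume {x : ι → ℝ | eval x p = 0} = 0 := by
  let e := Fintype.equivFin ι
  have hp' : rename e p ≠ 0 := (rename_injective e e.injective).ne_iff' (map_zero _) |>.mpr hp
  rw [← (volume_measurePreserving_piCongrLeft (fun _ ↦ ℝ) e.symm).measure_preimage_equiv]
  convert volume_setOf_eval_eq_zero_fin hp' using 2
  ext x
  simp only [Set.mem_preimage, Set.mem_ofPred_eq, eval_rename]
  congr! 3
  ext i
  simpa [MeasurableEquiv.coe_piCongrLeft] using
    Equiv.piCongrLeft_apply_apply (fun _ ↦ ℝ) e.symm x (e i)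

end MvPolynomial

namespace Matrix

variable {m n k R : Type*}

theorem rank_eq_card_of_det_transpose_mul_self_ne_zero [Fintype m] [Fintype n] [DecidableEq n]
    [Field R] [LinearOrder R] [IsStrictOrderedRing R] {M : Matrix m n R} (h : (Mᵀ * M).det ≠ 0) :
    M.rank = Fintype.card n := by
  rw [← rank_transpose_mul_self, rank_of_isUnit _ ((isUnit_iff_isUnit_det _).mpr h.isUnit)]

def khatriRao [Mul R] (A : Matrix m k R) (B : Matrix n k R) : Matrix (m × n) k R :=
  of fun p f ↦ A p.1 f * B p.2 f

theorem khatriRao_map {S : Type*} [NonAssocSemiring R] [NonAssocSemiring S] (φ : R →+* S)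
    (A : Matrix m k R) (B : Matrix n k R) :
    (khatriRao A B).map φ = khatriRao (A.map φ) (B.map φ) := by
  ext p f
  simp [khatriRao]

theorem khatriRao_ite_eq_submatrix_one [DecidableEq m] [DecidableEq n] [Semiring R]
    (φ : k → m × n) :
    khatriRao (of fun i f ↦ if i = (φ f).1 then 1 else 0)
        (of fun j f ↦ if j = (φ f).2 then 1 else 0) =
      (1 : Matrix (m × n) (m × n) R).submatrix id φ := by
  ext p f
  simp only [khatriRao, of_apply, submatrix_apply, id, one_apply, Prod.ext_iff, ite_and,
    boole_mul]

open MvPolynomial in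
noncomputable def khatriRaoGramDet (m n k R : Type*) [Fintype m] [Fintype n] [Fintype k]
    [DecidableEq k] [CommRing R] : MvPolynomial ((m × k) ⊕ (n × k)) R :=
  let M : Matrix (m × n) k (MvPolynomial ((m × k) ⊕ (n × k)) R) :=
    khatriRao (of fun i f ↦ X (Sum.inl (i, f))) (of fun j f ↦ X (Sum.inr (j, f)))
  (Mᵀ * M).det

section GramDet

variable [Fintype m] [Fintype n] [Fintype k] [DecidableEq k]

theorem eval_khatriRaoGramDet [CommRing R] (x : (m × k) ⊕ (n × k) → R) :
    MvPolynomial.eval x (khatriRaoGramDet m n k R) =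
      let M := khatriRao (of fun i f ↦ x (Sum.inl (i, f))) (of fun j f ↦ x (Sum.inr (j, f)))
      (Mᵀ * M).det := by
  rw [khatriRaoGramDet, RingHom.map_det, RingHom.mapMatrix_apply, Matrix.map_mul,
    transpose_map, khatriRao_map]
  congr! <;> ext <;> simp

theorem khatriRaoGramDet_ne_zero [CommRing R] [Nontrivial R]
    (h : Fintype.card k ≤ Fintype.card m * Fintype.card n) :
    khatriRaoGramDet m n k R ≠ 0 := by
  classical
  obtain ⟨φ⟩ : Nonempty (k ↪ m × n) := Function.Embedding.nonempty_of_card_le (by simpa using h)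
  intro h0
  -- at the 0/1 point where the columns of `A ⊙ B` are distinct unit vectors the Gram matrix is `1`
  have := eval_khatriRaoGramDet (R := R) (Sum.elim (fun q ↦ if q.1 = (φ q.2).1 then 1 else 0)
    (fun q ↦ if q.1 = (φ q.2).2 then 1 else 0))
  simp only [h0, map_zero, Sum.elim_inl, Sum.elim_inr] at this
  rw [khatriRao_ite_eq_submatrix_one, transpose_submatrix, transpose_one,
    ← submatrix_mul _ _ _ _ _ Function.bijective_id, Matrix.mul_one, submatrix_one _ φ.injective,
    det_one] at this
  exact zero_ne_one this

theorem volume_setOf_det_transpose_khatriRao_mul_eq_zero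
    (h : Fintype.card k ≤ Fintype.card m * Fintype.card n) :
    volume {e : (m → k → ℝ) × (n → k → ℝ) |
      ((khatriRao e.1 e.2)ᵀ * khatriRao e.1 e.2).det = 0} = 0 := by
  let Φ := (MeasurableEquiv.sumPiEquivProdPi fun _ : (m × k) ⊕ (n × k) ↦ ℝ).trans
    ((MeasurableEquiv.curry m k ℝ).prodCongr (MeasurableEquiv.curry n k ℝ))
  have hΦ : MeasurePreserving Φ volume volume :=
    ((volume_measurePreserving_curry m k).prod (volume_measurePreserving_curry n k)).comp
      (volume_measurePreserving_sumPiEquivProdPi _)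
  rw [← hΦ.measure_preimage_equiv]
  convert MvPolynomial.volume_setOf_eval_eq_zero (khatriRaoGramDet_ne_zero (R := ℝ) h) using 2
  ext x
  simp only [Set.mem_preimage, Set.mem_ofPred_eq, eval_khatriRaoGramDet]
  rfl

end GramDet

end Matrix

/-- The Khatri-Rao product of jointly absolutely continuous random factors has
full column rank almost surely when IJ ≥ F. -/
theorem stmt_13 {Ω : Type*} [MeasurableSpace Ω] (μ : Measure Ω) (I J F : ℕ)
    (A : Ω → (Fin I → Fin F → ℝ)) (B : Ω → (Fin J → Fin F → ℝ))
    (hmeas : Measurable (fun ω => (A ω, B ω)))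
    (habs : μ.map (fun ω => (A ω, B ω))
      ≪ (volume : Measure ((Fin I → Fin F → ℝ) × (Fin J → Fin F → ℝ))))
    (hIJ : F ≤ I * J) :
    ∀ᵐ ω ∂μ,
      (Matrix.of fun (p : Fin I × Fin J) (f : Fin F) => A ω p.1 f * B ω p.2 f).rank = F := by
  have hnull := Matrix.volume_setOf_det_transpose_khatriRao_mul_eq_zero
    (m := Fin I) (n := Fin J) (k := Fin F) (by simpa using hIJ)
  have hgood : ∀ᵐ e ∂μ.map (fun ω => (A ω, B ω)),
      ((Matrix.khatriRao e.1 e.2).transpose * Matrix.khatriRao e.1 e.2).det ≠ 0 :=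
    habs.ae_le (ae_iff.2 (by simpa using hnull))
  filter_upwards [ae_of_ae_map hmeas.aemeasurable hgood] with ω hω
  have hrank := Matrix.rank_eq_card_of_det_transpose_mul_self_ne_zero hω
  rwa [Fintype.card_fin] at hrank
end

section
/- Let B ∈ ℝ^{J×F} have two rows, indexed r and s, such that all entries of row s are nonzero and the entrywise ratios B(r,f)/B(s,f) are pairwise distinct across f = 1,…,F. If B' = BΠΓ for a permutation matrix Π and an invertible diagonal matrix Γ, then Π and Γ are uniquely determined by the rows r and s of B and B' (i.e., the permutation can be recovered by matching the ratio vectors, and Γ by the entrywise quotient of row s). -/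
open Matrix

/-- P is a permutation matrix. -/
def IsPermMatrix {F : Type*} [DecidableEq F] (P : Matrix F F ℝ) : Prop :=
  ∃ σ : Equiv.Perm F, ∀ i j, P i j = if i = σ j then 1 else 0

section PermDiag

variable {K m n : Type*} [Fintype n] [DecidableEq n]

theorem mul_perm_mul_diag_apply [Semiring K] (B : Matrix m n K) {P Γ : Matrix n n K}
    {σ : Equiv.Perm n} (hP : ∀ i j, P i j = if i = σ j then 1 else 0) (hΓ : Γ.IsDiag)
    (i : m) (j : n) : (B * P * Γ) i j = B i (σ j) * Γ j j := by
  rw [← hΓ.diagonal_diag, mul_diagonal, mul_apply]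
  simp [hP]

variable [Field K] (B : Matrix m n K) {P Γ : Matrix n n K} {σ : Equiv.Perm n}

theorem div_mul_perm_mul_diag (hP : ∀ i j, P i j = if i = σ j then 1 else 0)
    (hΓ : Γ.IsDiag) {j : n} (hj : Γ j j ≠ 0) (r s : m) :
    (B * P * Γ) r j / (B * P * Γ) s j = B r (σ j) / B s (σ j) := by
  rw [mul_perm_mul_diag_apply B hP hΓ, mul_perm_mul_diag_apply B hP hΓ, mul_div_mul_right _ _ hj]

theorem diag_eq_div_mul_perm_mul_diag (hP : ∀ i j, P i j = if i = σ j then 1 else 0)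
    (hΓ : Γ.IsDiag) {s : m} {j : n} (hs : B s (σ j) ≠ 0) :
    Γ j j = (B * P * Γ) s j / B s (σ j) := by
  rw [mul_perm_mul_diag_apply B hP hΓ, mul_div_cancel_left₀ _ hs]

end PermDiag

/-- Two-common-rows alignment: if row s of B has nonzero entries and the ratios of
rows r and s are pairwise distinct, then the permutation and invertible diagonal
scaling in B' = BPmΓ are uniquely determined. -/
theorem stmt_14 (Jn F : ℕ) (B : Matrix (Fin Jn) (Fin F) ℝ) (r s : Fin Jn)
    (hs : ∀ f, B s f ≠ 0)
    (hratio : Function.Injective (fun f => B r f / B s f))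
    (Pm1 Pm2 Γ₁ Γ₂ : Matrix (Fin F) (Fin F) ℝ)
    (hPm1 : IsPermMatrix Pm1) (hPm2 : IsPermMatrix Pm2)
    (hΓ₁d : Γ₁.IsDiag) (hΓ₂d : Γ₂.IsDiag)
    (hΓ₁ : ∀ f, Γ₁ f f ≠ 0) (hΓ₂ : ∀ f, Γ₂ f f ≠ 0)
    (heq : B * Pm1 * Γ₁ = B * Pm2 * Γ₂) :
    Pm1 = Pm2 ∧ Γ₁ = Γ₂ := by
  obtain ⟨σ₁, hσ₁⟩ := hPm1
  obtain ⟨σ₂, hσ₂⟩ := hPm2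
  have hσ : σ₁ = σ₂ := Equiv.ext fun j => hratio <| by
    dsimp only
    rw [← div_mul_perm_mul_diag B hσ₁ hΓ₁d (hΓ₁ j), heq,
      div_mul_perm_mul_diag B hσ₂ hΓ₂d (hΓ₂ j)]
  subst hσ
  refine ⟨ext fun i j => by rw [hσ₁, hσ₂], ext fun i j => ?_⟩
  rcases eq_or_ne i j with rfl | hij
  · rw [diag_eq_div_mul_perm_mul_diag B hσ₁ hΓ₁d (hs _), heq,
      ← diag_eq_div_mul_perm_mul_diag B hσ₂ hΓ₂d (hs _)]
  · rw [hΓ₁d hij, hΓ₂d hij]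
end
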